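/- (generalise_Δ is a generalisation operation.) For every division Δ and every finite set S of atoms safe wrt Δ: generalise_Δ(S) is a finite set of atoms using the same predicate symbols as those occurring in S, and every atom in S is an instance of an atom in generalise_Δ(S). -/

import Mathlib

/-! `gen_Δ` replaces some subterms of an atom by distinct fresh variables, so substituting the
replaced subterms back for those variables recovers the atom: every `A ∈ S` is an instance of
`gen_Δ(A)`, hence, instances being transitive, of the variant of `gen_Δ(A)` kept in
`generalise_Δ(S)`. Finiteness and the predicate symbols are inherited from `S` through the image. -/

/-- First-order terms over countably infinite sets of variables (ℕ)
and function symbols (ℕ). -/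
inductive Term : Type where
  | var : ℕ → Term
  | app : ℕ → List Term → Term

namespace Term

/-- Applying a substitution (a mapping from variables to terms) homomorphically. -/
def subst (θ : ℕ → Term) : Term → Term
  | var v => θ v
  | app f ts => app f (ts.attach.map (fun x => x.1.subst θ))
decreasing_by
  have := List.sizeOf_lt_of_mem x.2
  simp only [Term.app.sizeOf_spec]
  omega

/-- A term is ground if it contains no variables. -/
inductive Ground : Term → Prop where
  | app : ∀ f ts, (∀ t ∈ ts, Ground t) → Ground (app f ts)

/-- The variable `v` occurs in the term. -/
inductive Occurs (v : ℕ) : Term → Prop where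
  | var : Occurs v (var v)
  | app : ∀ f ts t, t ∈ ts → Occurs v t → Occurs v (app f ts)

/-- `s` is an instance of `t` if `s = tθ` for some substitution `θ`. -/
def IsInstanceOf (s t : Term) : Prop := ∃ θ : ℕ → Term, t.subst θ = s

/-- Two terms are variants if each is an instance of the other. -/
def Variant (s t : Term) : Prop := s.IsInstanceOf t ∧ t.IsInstanceOf s

end Term

/-- Types: type variables, the distinguished 0-ary constructors
`static`, `dynamic`, `nonvar`, and other constructors applied to types. -/
inductive Ty : Type where
  | var : ℕ → Ty
  | static : Ty
  | dynamic : Ty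
  | nonvar : Ty
  | con : ℕ → List Ty → Ty

namespace Ty

/-- Applying a type substitution. -/
def subst (σ : ℕ → Ty) : Ty → Ty
  | var v => σ v
  | static => static
  | dynamic => dynamic
  | nonvar => nonvar
  | con c args => con c (args.attach.map (fun x => x.1.subst σ))
decreasing_by
  have := List.sizeOf_lt_of_mem x.2
  simp only [Ty.con.sizeOf_spec]
  omega

/-- A type is ground if it contains no type variables. -/
inductive Ground : Ty → Prop where
  | static : Ground static
  | dynamic : Ground dynamic
  | nonvar : Ground nonvar
  | con : ∀ c args, (∀ τ ∈ args, Ground τ) → Ground (con c args)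

/-- All type variables of the type are below `n`. -/
inductive VarsBelow (n : ℕ) : Ty → Prop where
  | var : ∀ v, v < n → VarsBelow n (var v)
  | static : VarsBelow n static
  | dynamic : VarsBelow n dynamic
  | nonvar : VarsBelow n nonvar
  | con : ∀ c args, (∀ τ ∈ args, VarsBelow n τ) → VarsBelow n (con c args)

end Ty

/-- A type definition `c(V₁,…,Vₙ) → f₁(T₁¹,…) ; … ; f_k(T_k¹,…)` for an
`n`-ary type constructor: the variables are represented by `0,…,arity-1`,
the alternatives are pairs of a function symbol and the list of argument types;
the function symbols are distinct and the argument types only use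
variables among `0,…,arity-1`. -/
structure TypeDef where
  arity : ℕ
  alts : List (ℕ × List Ty)
  alts_nonempty : alts ≠ []
  alts_nodup : (alts.map Prod.fst).Nodup
  vars_bound : ∀ p ∈ alts, ∀ τ ∈ p.2, Ty.VarsBelow arity τ

/-- A type system: exactly one type definition for every type constructor
other than `static`, `dynamic` and `nonvar`. -/
structure TypeSystem where
  defs : ℕ → TypeDef

mutual
/-- The type judgement `t : τ` relative to the type system `Γ`. -/
inductive HasType (Γ : TypeSystem) : Term → Ty → Prop where
  | dyn (t : Term) : HasType Γ t .dynamic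
  | stat (t : Term) : t.Ground → HasType Γ t .static
  | nv (f : ℕ) (ts : List Term) : HasType Γ (.app f ts) .nonvar
  | con (c : ℕ) (σ : ℕ → Ty) (f : ℕ) (Ts : List Ty) (ts : List Term)
      (hσ : ∀ v, (σ v).Ground)
      (hmem : (f, Ts) ∈ (Γ.defs c).alts)
      (hargs : HasTypeArgs Γ ts (Ts.map (Ty.subst σ))) :
      HasType Γ (.app f ts) (.con c ((List.range (Γ.defs c).arity).map σ))

/-- `HasTypeArgs Γ ts τs` : the terms `ts` pointwise have the types `τs`. -/
inductive HasTypeArgs (Γ : TypeSystem) : List Term → List Ty → Prop where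
  | nil : HasTypeArgs Γ [] []
  | cons {t τ ts τs} : HasType Γ t τ → HasTypeArgs Γ ts τs →
      HasTypeArgs Γ (t :: ts) (τ :: τs)
end

/-- Atoms `p(t₁,…,tₙ)` over a countably infinite set of predicate symbols (ℕ). -/
structure Atom where
  pred : ℕ
  args : List Term

namespace Atom

/-- Substitutions apply to atoms argumentwise. -/
def subst (θ : ℕ → Term) (A : Atom) : Atom := ⟨A.pred, A.args.map (Term.subst θ)⟩

/-- `B` is an instance of `A`. -/
def IsInstanceOf (B A : Atom) : Prop := ∃ θ : ℕ → Term, A.subst θ = B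

/-- Two atoms are variants if each is an instance of the other. -/
def Variant (A B : Atom) : Prop := A.IsInstanceOf B ∧ B.IsInstanceOf A

end Atom

/-- A division: a set of expressions `p(τ₁,…,τₙ)` (represented as pairs of a
predicate symbol and a list of types), with all types ground and at most one
division per predicate. -/
def IsDivision (Δ : Set (ℕ × List Ty)) : Prop :=
  (∀ d ∈ Δ, ∀ τ ∈ d.2, τ.Ground) ∧
  (∀ d ∈ Δ, ∀ d' ∈ Δ, d.1 = d'.1 → d = d')

/-- An atom `p(t₁,…,tₙ)` is safe wrt `Δ` iff there is `p(τ₁,…,τₙ) ∈ Δ`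
with `tᵢ : τᵢ` for all `i`. -/
def SafeAtom (Γ : TypeSystem) (Δ : Set (ℕ × List Ty)) (A : Atom) : Prop :=
  ∃ τs : List Ty, (A.pred, τs) ∈ Δ ∧ HasTypeArgs Γ A.args τs

mutual
/-- `Gen Γ τ t s L`: `s` is a result of the partial generalisation mapping
`gen_τ(t)`, where `L` records (in order) the fresh variables chosen. -/
inductive Gen (Γ : TypeSystem) : Ty → Term → Term → List ℕ → Prop where
  | static (t : Term) : Gen Γ .static t t []
  | dynamic (t : Term) (v : ℕ) : Gen Γ .dynamic t (.var v) [v]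
  | nonvar (f : ℕ) (ts : List Term) (vs : List ℕ) (h : vs.length = ts.length) :
      Gen Γ .nonvar (.app f ts) (.app f (vs.map Term.var)) vs
  | con (c : ℕ) (σ : ℕ → Ty) (f : ℕ) (Ts : List Ty) (ts ss : List Term) (L : List ℕ)
      (hσ : ∀ v, (σ v).Ground)
      (hmem : (f, Ts) ∈ (Γ.defs c).alts)
      (hargs : GenArgs Γ (Ts.map (Ty.subst σ)) ts ss L) :
      Gen Γ (.con c ((List.range (Γ.defs c).arity).map σ)) (.app f ts) (.app f ss) L

/-- Pointwise generalisation of a list of terms, collecting the fresh variables. -/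
inductive GenArgs (Γ : TypeSystem) : List Ty → List Term → List Term → List ℕ → Prop where
  | nil : GenArgs Γ [] [] [] []
  | cons {τ t s L τs ts ss Ls} : Gen Γ τ t s L → GenArgs Γ τs ts ss Ls →
      GenArgs Γ (τ :: τs) (t :: ts) (s :: ss) (L ++ Ls)
end

/-- `GenAtom Γ Δ A B L`: `B` is a result of `gen_Δ(A)` with fresh variables `L`. -/
def GenAtom (Γ : TypeSystem) (Δ : Set (ℕ × List Ty)) (A B : Atom) (L : List ℕ) : Prop :=
  B.pred = A.pred ∧
  ∃ τs : List Ty, (A.pred, τs) ∈ Δ ∧ HasTypeArgs Γ A.args τs ∧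
    GenArgs Γ τs A.args B.args L

namespace Term

theorem subst_app (θ : ℕ → Term) (f : ℕ) (ts : List Term) :
    (app f ts).subst θ = app f (ts.map (subst θ)) := by
  rw [subst]; simp

theorem subst_var (θ : ℕ → Term) (v : ℕ) : (var v).subst θ = θ v := by
  rw [subst]

theorem subst_subst (θ θ' : ℕ → Term) (t : Term) :
    (t.subst θ).subst θ' = t.subst (fun v => (θ v).subst θ') := by
  induction t using Term.subst.induct with
  | case1 v => rw [subst_var, subst_var]
  | case2 f ts ih =>
    rw [subst_app, subst_app, subst_app, List.map_map]
    exact congrArg _ (List.map_congr_left fun a ha => ih ⟨a, ha⟩)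

theorem subst_eq_self {θ : ℕ → Term} {t : Term} (h : ∀ v, Occurs v t → θ v = var v) :
    t.subst θ = t := by
  induction t using Term.subst.induct with
  | case1 v => rw [subst_var]; exact h v .var
  | case2 f ts ih =>
    rw [subst_app, List.map_congr_left (g := id) fun a ha =>
      ih ⟨a, ha⟩ fun v hv => h v (.app f ts a ha hv), List.map_id]

end Term

theorem Atom.IsInstanceOf.trans {A B C : Atom} (hAB : A.IsInstanceOf B)
    (hBC : B.IsInstanceOf C) : A.IsInstanceOf C := by
  obtain ⟨θ, rfl⟩ := hAB
  obtain ⟨θ', rfl⟩ := hBC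
  refine ⟨fun v => (θ' v).subst θ, ?_⟩
  simp only [Atom.subst, List.map_map, Function.comp_def, Term.subst_subst]

theorem List.exists_map_eq_of_nodup {α β : Type*} [DecidableEq α] (f : α → β) {l : List α}
    (hl : l.Nodup) {bs : List β} (hlen : bs.length = l.length) :
    ∃ g : α → β, l.map g = bs ∧ ∀ a ∉ l, g a = f a := by
  induction l generalizing bs with
  | nil => exact ⟨f, (List.length_eq_zero_iff.mp hlen).symm, fun _ _ => rfl⟩
  | cons a l ih =>
    obtain ⟨ha, hl⟩ := List.nodup_cons.mp hl
    obtain _ | ⟨b, bs⟩ := bs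
    · simp at hlen
    obtain ⟨g, hg, hout⟩ := ih hl (Nat.succ.inj hlen)
    refine ⟨Function.update g a b, ?_, fun x hx => ?_⟩
    · rw [List.map_cons, Function.update_self, ← hg]
      exact congrArg _ (List.map_congr_left fun x hx =>
        Function.update_of_ne (ne_of_mem_of_not_mem hx ha) _ _)
    · rw [List.mem_cons, not_or] at hx
      obtain ⟨hxa, hxl⟩ := hx
      rw [Function.update_of_ne hxa, hout x hxl]

section Generalisation

variable {Γ : TypeSystem}

mutual

/-- `us` lists the subterms of `t` that the fresh variables `L` of `gen_τ(t)` stand for. -/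
theorem Gen.exists_subst_eq {τ : Ty} {t s : Term} {L : List ℕ} :
    Gen Γ τ t s L → ∃ us : List Term, us.length = L.length ∧
      ∀ θ : ℕ → Term, L.map θ = us → t.subst θ = t → s.subst θ = t
  | .static t => ⟨[], rfl, fun _ _ ht => ht⟩
  | .dynamic t v => ⟨[t], rfl, fun θ hθ _ => by
      rw [Term.subst_var]; exact List.singleton_inj.mp hθ⟩
  | .nonvar f ts vs hlen => ⟨ts, hlen.symm, fun θ hθ _ => by
      rw [Term.subst_app, List.map_map, ← hθ, Function.comp_def]
      simp only [Term.subst_var]⟩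
  | .con _ _ f _ ts ss _ _ _ hargs =>
    let ⟨us, hlen, hus⟩ := GenArgs.exists_subst_eq hargs
    ⟨us, hlen, fun θ hθ ht => by
      rw [Term.subst_app] at ht ⊢
      exact congrArg _ (hus θ hθ (Term.app.inj ht).2)⟩

theorem GenArgs.exists_subst_eq {τs : List Ty} {ts ss : List Term} {L : List ℕ} :
    GenArgs Γ τs ts ss L → ∃ us : List Term, us.length = L.length ∧
      ∀ θ : ℕ → Term, L.map θ = us → ts.map (Term.subst θ) = ts → ss.map (Term.subst θ) = ts
  | .nil => ⟨[], rfl, fun _ _ _ => rfl⟩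
  | .cons hgen hargs =>
    let ⟨us, hlen, hus⟩ := hgen.exists_subst_eq
    let ⟨us', hlen', hus'⟩ := GenArgs.exists_subst_eq hargs
    ⟨us ++ us', by simp [hlen, hlen'], fun θ hθ hts => by
      rw [List.map_append] at hθ
      obtain ⟨hθ, hθ'⟩ := List.append_inj hθ (by rw [List.length_map, hlen])
      obtain ⟨ht, hts⟩ := List.cons_eq_cons.mp hts
      rw [List.map_cons, hus θ hθ ht, hus' θ hθ' hts]⟩

end

/-- The witnessing substitution sends each fresh variable back to the subterm it replaced;
freshness makes it fix the original arguments. -/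
theorem GenAtom.isInstanceOf {Δ : Set (ℕ × List Ty)} {A B : Atom} {L : List ℕ}
    (hgen : GenAtom Γ Δ A B L) (hnodup : L.Nodup)
    (hfresh : ∀ v ∈ L, ∀ t ∈ A.args, ¬ Term.Occurs v t) : A.IsInstanceOf B := by
  obtain ⟨hpred, τs, -, -, hargs⟩ := hgen
  obtain ⟨us, hlen, hus⟩ := hargs.exists_subst_eq
  obtain ⟨θ, hθ, hout⟩ := List.exists_map_eq_of_nodup Term.var hnodup hlen
  have hfix : A.args.map (Term.subst θ) = A.args :=
    (List.map_congr_left fun t ht => Term.subst_eq_self fun v hv =>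
      hout v fun hvL => hfresh v hvL t ht hv).trans (List.map_id _)
  exact ⟨θ, by rw [Atom.subst, hus θ hθ hfix, hpred]⟩

end Generalisation

/-- **`generalise_Δ` is a generalisation operation.** For every division `Δ` and
every finite set `S` of atoms safe wrt `Δ`: `generalise_Δ(S)` is a finite set of
atoms using the same predicate symbols as those occurring in `S`, and every atom
in `S` is an instance of an atom in `generalise_Δ(S)`. -/
theorem generalise_is_generalisation (Γ : TypeSystem) (Δ : Set (ℕ × List Ty))
    (hΔ : IsDivision Δ)
    (S : Set Atom) (hfin : S.Finite) (hsafe : ∀ A ∈ S, SafeAtom Γ Δ A)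
    -- `g A` is a result of `gen_Δ(A)` (with distinct fresh variables not
    -- occurring in `A`), for every `A ∈ S`
    (g : Atom → Atom)
    (hg : ∀ A ∈ S, ∃ L : List ℕ, GenAtom Γ Δ A (g A) L ∧ L.Nodup ∧
            ∀ v ∈ L, ∀ t ∈ A.args, ¬ Term.Occurs v t)
    -- `S₁` is a minimal subset of `S₂ = { gen_Δ(s) | s ∈ S }` such that every
    -- element of `S₂` has a variant in `S₁`
    (S₁ : Set Atom)
    (hsub : S₁ ⊆ g '' S)
    (hcover : ∀ B ∈ g '' S, ∃ B' ∈ S₁, B.Variant B')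
    (hmin : ∀ S₀ ⊆ S₁, (∀ B ∈ g '' S, ∃ B' ∈ S₀, B.Variant B') → S₀ = S₁) :
    S₁.Finite ∧ (∀ B ∈ S₁, ∃ A ∈ S, B.pred = A.pred) ∧
      (∀ A ∈ S, ∃ B ∈ S₁, A.IsInstanceOf B) := by
  refine ⟨(hfin.image g).subset hsub, fun B hB => ?_, fun A hA => ?_⟩
  · obtain ⟨A, hA, rfl⟩ := hsub hB
    obtain ⟨L, ⟨hpred, -⟩, -⟩ := hg A hA
    exact ⟨A, hA, hpred⟩
  · obtain ⟨L, hgen, hnodup, hfresh⟩ := hg A hA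
    obtain ⟨B, hB, hvariant⟩ := hcover (g A) ⟨A, hA, rfl⟩
    exact ⟨B, hB, (hgen.isInstanceOf hnodup hfresh).trans hvariant.1⟩
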